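/- For every q ≥ 1 there exists a constant C > 0, depending only on q, such that for every Lévy measure ν and every jointly Borel measurable function f : ℝ × ℝ → ℝ one has ‖ s ↦ ∫_ℝ |f(u, s)| du ‖_{q,ν} ≤ C ∫_ℝ ‖ f(u, ·) ‖_{q,ν} du, where both sides take values in [0, ∞] and the right-hand side is a Lebesgue (upper) integral in u. -/

import Mathlib

/-!
`phi q` is not convex, but it is squeezed between the convex function `psi q` and `psi q (2 ·)`.
Given `ρ > ∫ ‖f (u, ·)‖ du`, pick `M u > ‖f (u, ·)‖` with `∫ M ≤ ρ`. For `F s = ∫ |f (u, s)| du`,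
Jensen's inequality for `psi q` with the sub-probability weights `M u / ρ` gives, for all `s`, `v`,
`phi (F s * v / 2ρ) ≤ ∫ (M u / ρ) * phi (f (u, s) * v / M u) du`; integrating in `s` and `ν(dv)`
(Tonelli, as a Lévy measure is σ-finite) yields `Φ (F / 2ρ) ≤ ∫ M u / ρ du ≤ 1`, so `C = 2`.
-/
open MeasureTheory Set
open scoped ENNReal

noncomputable section

/-- `φ_q(x) = |x|^q · 1_{|x|>1} + x² · 1_{|x|≤1}`. -/
def phi (q x : ℝ) : ℝ := if |x| ≤ 1 then x ^ 2 else |x| ^ q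

/-- `Φ_{q,ν}(F) = ∫_ℝ ∫_ℝ φ_q(F(s)·u) ds ν(du)`. -/
def PhiFun (q : ℝ) (ν : Measure ℝ) (F : ℝ → ℝ) : ℝ≥0∞ :=
  ∫⁻ u : ℝ, (∫⁻ s : ℝ, ENNReal.ofReal (phi q (F s * u))) ∂ν

/-- `‖F‖_{q,ν} = inf {λ > 0 : Φ_{q,ν}(F/λ) ≤ 1}`, with `inf ∅ = ∞`. -/
def levyNorm (q : ℝ) (ν : Measure ℝ) (F : ℝ → ℝ) : ℝ≥0∞ :=
  sInf ((fun l : ℝ => ENNReal.ofReal l) ''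
    {l : ℝ | 0 < l ∧ PhiFun q ν (fun s => F s / l) ≤ 1})

lemma phi_abs (q x : ℝ) : phi q |x| = phi q x := by
  rw [phi, phi, abs_abs, sq_abs]

lemma phi_le_phi_of_abs_le {q x y : ℝ} (hq : 0 ≤ q) (h : |x| ≤ |y|) : phi q x ≤ phi q y := by
  unfold phi
  split_ifs with hx hy hy
  · exact sq_le_sq.mpr h
  · calc x ^ 2 = |x| ^ 2 := (sq_abs x).symm
      _ ≤ 1 := pow_le_one₀ (abs_nonneg x) hx
      _ ≤ |y| ^ q := Real.one_le_rpow (not_le.mp hy).le hq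
  · exact absurd (h.trans hy) hx
  · exact Real.rpow_le_rpow (abs_nonneg x) h hq

@[fun_prop]
lemma measurable_phi (q : ℝ) : Measurable (phi q) :=
  Measurable.ite (measurableSet_le measurable_id.abs measurable_const)
    (measurable_id.pow_const 2) (measurable_id.abs.pow_const q)

lemma rpow_add_mul_sub_le_rpow {q m x : ℝ} (hq : 1 ≤ q) (hm : 0 < m) (hx : 0 ≤ x) :
    m ^ q + q * m ^ (q - 1) * (x - m) ≤ x ^ q := by
  have hbern := one_add_mul_self_le_rpow_one_add
    (by linarith [div_nonneg hx hm.le] : -1 ≤ x / m - 1) hq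
  rw [add_sub_cancel, Real.div_rpow hx hm.le, le_div_iff₀ (Real.rpow_pos_of_pos hm q)] at hbern
  have hmq : m ^ q = m ^ (q - 1) * m := by
    rw [← Real.rpow_add_one hm.ne', sub_add_cancel]
  calc m ^ q + q * m ^ (q - 1) * (x - m) = (1 + q * (x / m - 1)) * m ^ q := by
        rw [hmq]; field_simp
    _ ≤ x ^ q := hbern

/-- Unlike `phi q`, convex on `[0, ∞)`: it is `C¹` there with nondecreasing derivative
`psiDeriv q`. -/
def psi (q x : ℝ) : ℝ := if x ≤ 1 then x ^ 2 / 2 else 1 / 2 + (x ^ q - 1) / q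

def psiDeriv (q m : ℝ) : ℝ := if m ≤ 1 then m else m ^ (q - 1)

lemma psi_zero (q : ℝ) : psi q 0 = 0 := by simp [psi]

lemma psi_nonneg {q x : ℝ} (hq : 1 ≤ q) : 0 ≤ psi q x := by
  unfold psi
  split_ifs with h
  · positivity
  · have : 1 ≤ x ^ q := Real.one_le_rpow (not_le.mp h).le (by linarith)
    have : 0 ≤ (x ^ q - 1) / q := div_nonneg (by linarith) (by linarith)
    linarith

lemma psiDeriv_nonneg (q : ℝ) {m : ℝ} (hm : 0 ≤ m) : 0 ≤ psiDeriv q m := by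
  unfold psiDeriv
  split_ifs
  · exact hm
  · exact Real.rpow_nonneg hm _

lemma psi_le_phi {q x : ℝ} (hq : 1 ≤ q) (hx : 0 ≤ x) : psi q x ≤ phi q x := by
  unfold psi phi
  rw [abs_of_nonneg hx]
  split_ifs with h
  · nlinarith
  · have : 1 ≤ x ^ q := Real.one_le_rpow (not_le.mp h).le (by linarith)
    have : (x ^ q - 1) / q ≤ x ^ q - 1 := div_le_self (by linarith) hq
    linarith

lemma phi_le_psi_two_mul {q x : ℝ} (hq : 1 ≤ q) (hx : 0 ≤ x) : phi q x ≤ psi q (2 * x) := by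
  have hq0 : 0 < q := by linarith
  unfold phi psi
  rw [abs_of_nonneg hx]
  split_ifs with h1 h2 h2
  · nlinarith
  · have := rpow_add_mul_sub_le_rpow hq one_pos (by linarith : 0 ≤ 2 * x)
    rw [Real.one_rpow, Real.one_rpow] at this
    have : 2 * x - 1 ≤ ((2 * x) ^ q - 1) / q := by rw [le_div_iff₀ hq0]; linarith
    nlinarith
  · linarith
  · have h2q := rpow_add_mul_sub_le_rpow hq one_pos zero_le_two
    rw [Real.one_rpow, Real.one_rpow] at h2q
    have hxq : 1 ≤ x ^ q := Real.one_le_rpow (not_le.mp h1).le hq0.le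
    have h2xq : (1 + q) * x ^ q ≤ (2 * x) ^ q := by
      rw [Real.mul_rpow zero_le_two hx]
      exact mul_le_mul_of_nonneg_right (by linarith) (by linarith)
    have : x ^ q + (x ^ q - 1) / q ≤ ((2 * x) ^ q - 1) / q := by
      rw [show x ^ q + (x ^ q - 1) / q = ((1 + q) * x ^ q - 1) / q by field_simp; ring]
      exact div_le_div_of_nonneg_right (by linarith) hq0.le
    have : 0 ≤ (x ^ q - 1) / q := div_nonneg (by linarith) hq0.le
    linarith

lemma psi_add_psiDeriv_mul_le {q m x : ℝ} (hq : 1 ≤ q) (hx : 0 ≤ x) :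
    psi q m + psiDeriv q m * x ≤ psi q x + psiDeriv q m * m := by
  have hq0 : 0 < q := by linarith
  unfold psi psiDeriv
  split_ifs with h1 h2 h2
  · nlinarith [sq_nonneg (x - m)]
  · have := rpow_add_mul_sub_le_rpow hq one_pos hx
    rw [Real.one_rpow, Real.one_rpow] at this
    have : x - 1 ≤ (x ^ q - 1) / q := by rw [le_div_iff₀ hq0]; linarith
    nlinarith [mul_nonneg (sub_nonneg.2 h1) (by linarith : (0:ℝ) ≤ x - 1)]
  · have hm1 : 1 < m := not_le.mp h1
    have := rpow_add_mul_sub_le_rpow hq (by linarith : 0 < m) zero_le_one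
    rw [Real.one_rpow] at this
    have : (m ^ q - 1) / q ≤ m ^ (q - 1) * (m - 1) := by rw [div_le_iff₀ hq0]; linarith
    have : 1 ≤ m ^ (q - 1) := Real.one_le_rpow hm1.le (by linarith : (0:ℝ) ≤ q - 1)
    nlinarith
  · have := rpow_add_mul_sub_le_rpow hq (by linarith : 0 < m) hx
    have : m ^ (q - 1) * (x - m) ≤ (x ^ q - m ^ q) / q := by rw [le_div_iff₀ hq0]; linarith
    have : (x ^ q - 1) / q = (m ^ q - 1) / q + (x ^ q - m ^ q) / q := by ring
    linarith

/-- Jensen's inequality for sub-probability weights: `ψ 0 = 0` absorbs the missing mass. -/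
lemma ofReal_le_lintegral_of_supporting_line {α : Type*} [MeasurableSpace α] {μ : Measure α}
    {ψ : ℝ → ℝ} {w g : α → ℝ} {m d : ℝ} (hψ0 : ψ 0 = 0) (hψ : ∀ x, 0 ≤ ψ x) (hm : 0 ≤ m)
    (hd : 0 ≤ d) (hsupp : ∀ x, 0 ≤ x → ψ m + d * x ≤ ψ x + d * m)
    (hw : Measurable w) (hw0 : ∀ a, 0 ≤ w a) (hg0 : ∀ a, 0 ≤ g a)
    (hW : ∫⁻ a, ENNReal.ofReal (w a) ∂μ ≤ 1)
    (hmean : ∫⁻ a, ENNReal.ofReal (w a * g a) ∂μ = ENNReal.ofReal m) :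
    ENNReal.ofReal (ψ m) ≤ ∫⁻ a, ENNReal.ofReal (w a * ψ (g a)) ∂μ := by
  set W := ∫⁻ a, ENNReal.ofReal (w a) ∂μ
  set c := ENNReal.ofReal (d * m)
  have hψm : ψ m ≤ d * m := by simpa [hψ0] using hsupp 0 le_rfl
  have hpoint : ∀ a, ENNReal.ofReal (ψ m) * ENNReal.ofReal (w a)
      + ENNReal.ofReal d * ENNReal.ofReal (w a * g a)
      ≤ ENNReal.ofReal (w a * ψ (g a)) + c * ENNReal.ofReal (w a) := fun a => by
    have := mul_le_mul_of_nonneg_left (hsupp (g a) (hg0 a)) (hw0 a)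
    rw [← ENNReal.ofReal_mul (hψ m), ← ENNReal.ofReal_mul hd, ← ENNReal.ofReal_mul
      (mul_nonneg hd hm), ← ENNReal.ofReal_add (mul_nonneg (hψ m) (hw0 a))
      (mul_nonneg hd (mul_nonneg (hw0 a) (hg0 a))),
      ← ENNReal.ofReal_add (mul_nonneg (hw0 a) (hψ (g a))) (mul_nonneg (mul_nonneg hd hm) (hw0 a))]
    exact ENNReal.ofReal_le_ofReal (by linarith)
  have hint : ENNReal.ofReal (ψ m) * W + c
      ≤ (∫⁻ a, ENNReal.ofReal (w a * ψ (g a)) ∂μ) + c * W := by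
    calc ENNReal.ofReal (ψ m) * W + c
        = (∫⁻ a, ENNReal.ofReal (ψ m) * ENNReal.ofReal (w a) ∂μ)
          + ∫⁻ a, ENNReal.ofReal d * ENNReal.ofReal (w a * g a) ∂μ := by
          rw [lintegral_const_mul' _ _ ENNReal.ofReal_ne_top,
            lintegral_const_mul' _ _ ENNReal.ofReal_ne_top, hmean, ← ENNReal.ofReal_mul hd]
      _ ≤ ∫⁻ a, ENNReal.ofReal (w a * ψ (g a)) + c * ENNReal.ofReal (w a) ∂μ :=
          (le_lintegral_add _ _).trans (lintegral_mono hpoint)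
      _ = (∫⁻ a, ENNReal.ofReal (w a * ψ (g a)) ∂μ) + c * W := by
          rw [lintegral_add_right' _ (hw.ennreal_ofReal.const_mul c).aemeasurable,
            lintegral_const_mul' _ _ ENNReal.ofReal_ne_top]
  have hcW : c * W ≠ ⊤ := ENNReal.mul_ne_top ENNReal.ofReal_ne_top (ne_top_of_le_ne_top
    ENNReal.one_ne_top hW)
  have hsplit : ENNReal.ofReal (ψ m) + c * W ≤ ENNReal.ofReal (ψ m) * W + c := by
    calc ENNReal.ofReal (ψ m) + c * W
        = ENNReal.ofReal (ψ m) * W + (ENNReal.ofReal (ψ m) * (1 - W) + c * W) := by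
          rw [← add_assoc, ← mul_add, add_tsub_cancel_of_le hW, mul_one]
      _ ≤ ENNReal.ofReal (ψ m) * W + (c * (1 - W) + c * W) := by
          gcongr; exact ENNReal.ofReal_le_ofReal hψm
      _ = ENNReal.ofReal (ψ m) * W + c := by
          rw [← mul_add, tsub_add_cancel_of_le hW, mul_one]
  exact (ENNReal.add_le_add_iff_right hcW).mp (hsplit.trans hint)

section LevyNorm

variable {q : ℝ} {ν : Measure ℝ}

lemma PhiFun_div_le_PhiFun_div (hq : 0 ≤ q) (g : ℝ → ℝ) {l l' : ℝ} (hl : 0 < l) (hll' : l ≤ l') :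
    PhiFun q ν (fun s => g s / l') ≤ PhiFun q ν (fun s => g s / l) := by
  refine lintegral_mono fun v => lintegral_mono fun s => ENNReal.ofReal_le_ofReal ?_
  refine phi_le_phi_of_abs_le hq ?_
  simp only [abs_mul, abs_div, abs_of_pos hl, abs_of_pos (hl.trans_le hll')]
  gcongr

lemma levyNorm_le_of_PhiFun_le {g : ℝ → ℝ} {l : ℝ} (hl : 0 < l)
    (h : PhiFun q ν (fun s => g s / l) ≤ 1) : levyNorm q ν g ≤ ENNReal.ofReal l :=
  sInf_le ⟨l, ⟨hl, h⟩, rfl⟩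

lemma PhiFun_le_one_of_levyNorm_lt (hq : 0 ≤ q) {g : ℝ → ℝ} {l : ℝ}
    (h : levyNorm q ν g < ENNReal.ofReal l) : PhiFun q ν (fun s => g s / l) ≤ 1 := by
  obtain ⟨_, ⟨l₀, ⟨hl₀, hΦ⟩, rfl⟩, hlt⟩ := sInf_lt_iff.mp h
  have hl₀l : l₀ < l := (ENNReal.ofReal_lt_ofReal_iff'.mp hlt).1
  exact (PhiFun_div_le_PhiFun_div hq g hl₀ hl₀l.le).trans hΦ

lemma levyNorm_eq_iInf_rat (hq : 0 ≤ q) (g : ℝ → ℝ) :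
    levyNorm q ν g = ⨅ r : ℚ,
      if 0 < (r : ℝ) ∧ PhiFun q ν (fun s => g s / r) ≤ 1 then ENNReal.ofReal r else ⊤ := by
  refine le_antisymm (le_iInf fun r => ?_) (le_of_forall_gt_imp_ge_of_dense fun b hb => ?_)
  · split_ifs with h
    · exact levyNorm_le_of_PhiFun_le h.1 h.2
    · exact le_top
  · obtain ⟨r, -, hlt, hrb⟩ := ENNReal.lt_iff_exists_rat_btwn.mp hb
    change levyNorm q ν g < ENNReal.ofReal r at hlt
    change ENNReal.ofReal r < b at hrb
    have hpos : 0 < (r : ℝ) := ENNReal.ofReal_pos.mp (pos_of_gt hlt)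
    refine (iInf_le _ r).trans ?_
    rw [if_pos ⟨hpos, PhiFun_le_one_of_levyNorm_lt hq hlt⟩]
    exact hrb.le

variable [SFinite ν]

lemma measurable_PhiFun_curry {G : ℝ × ℝ → ℝ} (hG : Measurable G) :
    Measurable fun u => PhiFun q ν (fun s => G (u, s)) := by
  refine Measurable.lintegral_prod_right' (f := fun p : ℝ × ℝ =>
    ∫⁻ s, ENNReal.ofReal (phi q (G (p.1, s) * p.2))) ?_
  exact Measurable.lintegral_prod_right' ((measurable_phi q).comp
    ((hG.comp (measurable_fst.fst.prodMk measurable_snd)).mul measurable_fst.snd)).ennreal_ofReal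

lemma measurable_levyNorm_curry (hq : 0 ≤ q) {f : ℝ × ℝ → ℝ} (hf : Measurable f) :
    Measurable fun u => levyNorm q ν (fun s => f (u, s)) := by
  simp_rw [levyNorm_eq_iInf_rat hq]
  refine Measurable.iInf fun r => Measurable.ite ?_ measurable_const measurable_const
  exact (MeasurableSet.const _).inter (measurableSet_le
    (measurable_PhiFun_curry (hf.div_const (r : ℝ))) measurable_const)

end LevyNorm

lemma lintegral_ofReal_div_le_one {α : Type*} [MeasurableSpace α] {μ : Measure α} {M : α → ℝ}
    {ρ : ℝ} (hρ : 0 < ρ) (hM : ∫⁻ a, ENNReal.ofReal (M a) ∂μ ≤ ENNReal.ofReal ρ) :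
    ∫⁻ a, ENNReal.ofReal (M a / ρ) ∂μ ≤ 1 := by
  simp_rw [div_eq_mul_inv, ENNReal.ofReal_mul' (inv_nonneg.mpr hρ.le)]
  rw [lintegral_mul_const' _ _ ENNReal.ofReal_ne_top, ← ENNReal.ofReal_one,
    ← mul_inv_cancel₀ hρ.ne', ENNReal.ofReal_mul hρ.le]
  gcongr

lemma ofReal_phi_le_lintegral {α : Type*} [MeasurableSpace α] {μ : Measure α} {q ρ : ℝ}
    (hq : 1 ≤ q) (hρ : 0 < ρ) {M : α → ℝ} (hM : Measurable M) (hM0 : ∀ a, 0 < M a)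
    (hMρ : ∫⁻ a, ENNReal.ofReal (M a / ρ) ∂μ ≤ 1) (h : α → ℝ) (v : ℝ) :
    ENNReal.ofReal (phi q ((∫⁻ a, ENNReal.ofReal |h a| ∂μ).toReal / (2 * ρ) * v)) ≤
      ∫⁻ a, ENNReal.ofReal (M a / ρ * phi q (h a / M a * v)) ∂μ := by
  by_cases htop : ∫⁻ a, ENNReal.ofReal |h a| ∂μ = ⊤
  · simp [htop, phi]
  set A := (∫⁻ a, ENNReal.ofReal |h a| ∂μ).toReal
  have hA : 0 ≤ A := ENNReal.toReal_nonneg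
  set m := A * (|v| / ρ)
  have hm : 0 ≤ m := by positivity
  have hphi : phi q (A / (2 * ρ) * v) ≤ psi q m := by
    rw [← phi_abs, abs_mul, abs_div, abs_of_nonneg hA, abs_of_pos (by positivity : 0 < 2 * ρ)]
    convert phi_le_psi_two_mul hq (by positivity : 0 ≤ A / (2 * ρ) * |v|) using 2
    ring
  have hweight : ∀ a, M a / ρ * |h a / M a * v| = |h a| * (|v| / ρ) := fun a => by
    rw [abs_mul, abs_div, abs_of_pos (hM0 a)]
    field_simp [(hM0 a).ne']
  have hmean : ∫⁻ a, ENNReal.ofReal (M a / ρ * |h a / M a * v|) ∂μ = ENNReal.ofReal m := by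
    simp_rw [hweight, ENNReal.ofReal_mul' (by positivity : 0 ≤ |v| / ρ)]
    rw [lintegral_mul_const' _ _ ENNReal.ofReal_ne_top, ENNReal.ofReal_mul hA,
      ENNReal.ofReal_toReal htop]
  have hjensen := ofReal_le_lintegral_of_supporting_line (psi_zero q) (fun _ => psi_nonneg hq) hm
    (psiDeriv_nonneg q hm) (fun _ hx => psi_add_psiDeriv_mul_le hq hx) (hM.div_const ρ)
    (fun a => (div_pos (hM0 a) hρ).le) (fun a => abs_nonneg _) hMρ hmean
  refine (ENNReal.ofReal_le_ofReal hphi).trans (hjensen.trans (lintegral_mono fun a => ?_))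
  refine ENNReal.ofReal_le_ofReal (mul_le_mul_of_nonneg_left ?_ (div_pos (hM0 a) hρ).le)
  exact (psi_le_phi hq (abs_nonneg _)).trans (phi_abs q _).le

lemma lintegral_lintegral_lintegral_rotate {α β γ : Type*} [MeasurableSpace α]
    [MeasurableSpace β] [MeasurableSpace γ] {μ : Measure α} {μ' : Measure β} {μ'' : Measure γ}
    [SFinite μ] [SFinite μ'] [SFinite μ''] {H : α → β → γ → ℝ≥0∞}
    (hH : Measurable fun p : α × β × γ => H p.1 p.2.1 p.2.2) :
    ∫⁻ c, ∫⁻ b, ∫⁻ a, H a b c ∂μ ∂μ' ∂μ'' = ∫⁻ a, ∫⁻ c, ∫⁻ b, H a b c ∂μ' ∂μ'' ∂μ := by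
  have hinner : ∀ c, ∫⁻ b, ∫⁻ a, H a b c ∂μ ∂μ' = ∫⁻ a, ∫⁻ b, H a b c ∂μ' ∂μ := fun c =>
    lintegral_lintegral_swap (hH.comp (measurable_snd.prodMk
      (measurable_fst.prodMk measurable_const))).aemeasurable
  simp_rw [hinner]
  refine lintegral_lintegral_swap (Measurable.aemeasurable ?_)
  exact Measurable.lintegral_prod_right' (f := fun p : (γ × α) × β => H p.1.2 p.2 p.1.1)
    (hH.comp (measurable_fst.snd.prodMk (measurable_snd.prodMk measurable_fst.fst)))

section Minkowski

variable {q : ℝ} {ν : Measure ℝ} [SFinite ν] {f : ℝ × ℝ → ℝ}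

lemma PhiFun_le_lintegral_mul_PhiFun (hq : 1 ≤ q) (hf : Measurable f) {M : ℝ → ℝ}
    (hM : Measurable M) (hM0 : ∀ u, 0 < M u) {ρ : ℝ} (hρ : 0 < ρ)
    (hMρ : ∫⁻ u, ENNReal.ofReal (M u / ρ) ≤ 1) :
    PhiFun q ν (fun s => (∫⁻ u, ENNReal.ofReal |f (u, s)|).toReal / (2 * ρ)) ≤
      ∫⁻ u, ENNReal.ofReal (M u / ρ) * PhiFun q ν (fun s => f (u, s) / M u) := by
  calc PhiFun q ν (fun s => (∫⁻ u, ENNReal.ofReal |f (u, s)|).toReal / (2 * ρ))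
      ≤ ∫⁻ v, (∫⁻ s, ∫⁻ u, ENNReal.ofReal (M u / ρ * phi q (f (u, s) / M u * v))) ∂ν :=
        lintegral_mono fun v => lintegral_mono fun s =>
          ofReal_phi_le_lintegral hq hρ hM hM0 hMρ (fun u => f (u, s)) v
    _ = ∫⁻ u, ∫⁻ v, (∫⁻ s, ENNReal.ofReal (M u / ρ * phi q (f (u, s) / M u * v))) ∂ν :=
        lintegral_lintegral_lintegral_rotate (by fun_prop)
    _ = ∫⁻ u, ENNReal.ofReal (M u / ρ) * PhiFun q ν (fun s => f (u, s) / M u) := by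
        refine lintegral_congr fun u => ?_
        simp_rw [ENNReal.ofReal_mul (div_pos (hM0 u) hρ).le,
          lintegral_const_mul' _ _ ENNReal.ofReal_ne_top]
        rfl

lemma levyNorm_le_of_weights (hq : 1 ≤ q) (hf : Measurable f) {M : ℝ → ℝ}
    (hM : Measurable M) (hM0 : ∀ u, 0 < M u) {ρ : ℝ} (hρ : 0 < ρ)
    (hMρ : ∫⁻ u, ENNReal.ofReal (M u) ≤ ENNReal.ofReal ρ)
    (hΦ : ∀ᵐ u, PhiFun q ν (fun s => f (u, s) / M u) ≤ 1) :
    levyNorm q ν (fun s => (∫⁻ u, ENNReal.ofReal |f (u, s)|).toReal) ≤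
      ENNReal.ofReal (2 * ρ) := by
  have hw := lintegral_ofReal_div_le_one hρ hMρ
  refine levyNorm_le_of_PhiFun_le (by positivity) ?_
  calc _ ≤ ∫⁻ u, ENNReal.ofReal (M u / ρ) * PhiFun q ν (fun s => f (u, s) / M u) :=
        PhiFun_le_lintegral_mul_PhiFun hq hf hM hM0 hρ hw
    _ ≤ ∫⁻ u, ENNReal.ofReal (M u / ρ) :=
        lintegral_mono_ae (hΦ.mono fun u hu => mul_le_of_le_one_right zero_le hu)
    _ ≤ 1 := hw

end Minkowski

lemma exists_pos_majorant_lintegral_le {α : Type*} [MeasurableSpace α] {μ : Measure α}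
    [SigmaFinite μ] {N : α → ℝ≥0∞} (hN : Measurable N) {ρ : ℝ≥0∞} (h : ∫⁻ a, N a ∂μ < ρ) :
    ∃ M : α → ℝ, Measurable M ∧ (∀ a, 0 < M a) ∧ ∫⁻ a, ENNReal.ofReal (M a) ∂μ ≤ ρ ∧
      ∀ a, N a ≠ ⊤ → N a < ENNReal.ofReal (M a) := by
  obtain ⟨g, hg0, hg, hgint⟩ := exists_pos_lintegral_lt_of_sigmaFinite μ (tsub_pos_of_lt h).ne'
  have hM : ∀ a, ENNReal.ofReal ((N a).toReal + g a) = ENNReal.ofReal (N a).toReal + g a :=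
    fun a => by
      rw [ENNReal.ofReal_add ENNReal.toReal_nonneg (g a).coe_nonneg, ENNReal.ofReal_coe_nnreal]
  refine ⟨fun a => (N a).toReal + g a, hN.ennreal_toReal.add hg.coe_nnreal_real,
    fun a => by have := hg0 a; positivity, ?_, fun a ha => ?_⟩
  · calc ∫⁻ a, ENNReal.ofReal ((N a).toReal + g a) ∂μ
        = ∫⁻ a, ENNReal.ofReal (N a).toReal + g a ∂μ := lintegral_congr hM
      _ = (∫⁻ a, ENNReal.ofReal (N a).toReal ∂μ) + ∫⁻ a, g a ∂μ :=
          lintegral_add_right' _ hg.coe_nnreal_ennreal.aemeasurable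
      _ ≤ (∫⁻ a, N a ∂μ) + (ρ - ∫⁻ a, N a ∂μ) :=
          add_le_add (lintegral_mono fun a => ENNReal.ofReal_toReal_le) hgint.le
      _ = ρ := add_tsub_cancel_of_le h.le
  · rw [hM, ENNReal.ofReal_toReal ha]
    exact ENNReal.lt_add_right ha (by simpa using (hg0 a).ne')

lemma sigmaFinite_of_levyMeasure {ν : Measure ℝ} (hν0 : ν {0} = 0)
    (hν : ∫⁻ x, ENNReal.ofReal (min 1 (x ^ 2)) ∂ν < ⊤) : SigmaFinite ν := by
  have hfin : ∀ c : ℝ, 0 < c → ν {x | c ≤ |x|} < ⊤ := fun c hc => by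
    have hε : ENNReal.ofReal (min 1 (c ^ 2)) ≠ 0 := by
      simp only [ne_eq, ENNReal.ofReal_eq_zero, not_le]; positivity
    refine lt_of_le_of_lt (measure_mono fun x (hx : c ≤ |x|) => ?_)
      ((meas_ge_le_lintegral_div (by fun_prop) hε ENNReal.ofReal_ne_top).trans_lt
        (ENNReal.div_lt_top hν.ne hε))
    exact ENNReal.ofReal_le_ofReal (min_le_min le_rfl (by nlinarith [sq_abs x]))
  refine ⟨⟨⟨fun n => {x | 1 / (n + 1 : ℝ) ≤ |x|} ∪ {0}, fun _ => trivial, fun n => ?_, ?_⟩⟩⟩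
  · exact (measure_union_le _ _).trans_lt (by rw [hν0, add_zero]; exact hfin _ (by positivity))
  · refine eq_univ_of_forall fun x => ?_
    rcases eq_or_ne x 0 with rfl | hx
    · exact mem_iUnion.mpr ⟨0, Or.inr rfl⟩
    · obtain ⟨n, hn⟩ := exists_nat_one_div_lt (abs_pos.mpr hx)
      exact mem_iUnion.mpr ⟨n, Or.inl hn.le⟩

lemma levyNorm_lintegral_abs_le_two_mul {q : ℝ} {ν : Measure ℝ} [SFinite ν] (hq : 1 ≤ q)
    {f : ℝ × ℝ → ℝ} (hf : Measurable f) :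
    levyNorm q ν (fun s => (∫⁻ u, ENNReal.ofReal |f (u, s)|).toReal) ≤
      ENNReal.ofReal 2 * ∫⁻ u, levyNorm q ν (fun s => f (u, s)) := by
  set N := fun u => levyNorm q ν (fun s => f (u, s))
  have hN : Measurable N := measurable_levyNorm_curry (by linarith) hf
  refine le_of_forall_gt_imp_ge_of_dense fun b hb => ?_
  rcases eq_or_ne b ⊤ with rfl | hb_top
  · exact le_top
  have hρ : ∫⁻ u, N u < ENNReal.ofReal (b.toReal / 2) := by
    rw [ENNReal.ofReal_div_of_pos two_pos, ENNReal.ofReal_toReal hb_top, ENNReal.ofReal_ofNat,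
      ENNReal.lt_div_iff_mul_lt (by simp) (by simp), mul_comm]
    simpa using hb
  obtain ⟨M, hM, hM0, hMρ, hNM⟩ := exists_pos_majorant_lintegral_le hN hρ
  have hΦ : ∀ᵐ u, PhiFun q ν (fun s => f (u, s) / M u) ≤ 1 :=
    (ae_lt_top hN (hρ.trans ENNReal.ofReal_lt_top).ne).mono fun u hu =>
      PhiFun_le_one_of_levyNorm_lt (by linarith) (hNM u hu.ne)
  calc _ ≤ ENNReal.ofReal (2 * (b.toReal / 2)) :=
        levyNorm_le_of_weights hq hf hM hM0 (ENNReal.ofReal_pos.mp (pos_of_gt hρ)) hMρ hΦ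
    _ = b := by rw [mul_div_cancel₀ _ two_ne_zero, ENNReal.ofReal_toReal hb_top]

/-- Lemma 4.12 (deterministic version): a Minkowski-type integral inequality for
the Orlicz-type functional `‖·‖_{q,ν}`. -/
theorem stmt_11 :
    ∀ q : ℝ, 1 ≤ q → ∃ C > (0 : ℝ),
      ∀ ν : Measure ℝ, ν {0} = 0 →
        (∫⁻ x : ℝ, ENNReal.ofReal (min 1 (x ^ 2)) ∂ν) < ⊤ →
        ∀ f : ℝ × ℝ → ℝ, Measurable f →
          levyNorm q ν
              (fun s => (∫⁻ u : ℝ, ENNReal.ofReal |f (u, s)|).toReal) ≤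
            ENNReal.ofReal C * ∫⁻ u : ℝ, levyNorm q ν (fun s => f (u, s)) := by
  intro q hq
  refine ⟨2, two_pos, fun ν hν0 hν f hf => ?_⟩
  have := sigmaFinite_of_levyMeasure hν0 hν
  exact levyNorm_lintegral_abs_le_two_mul hq hf

end
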